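/- arXiv:2604.10177 — 8 statements merged into one kernel-verified Lean document; each statement's English description precedes it below -/
import Mathlib

section
/- For every n ≥ 2 one has u_n ≥ u_{n−1} + K; that is, consecutive exploration phases of the diminishing-exploration schedule, each of length K, do not overlap. -/
/-!
With `c = K/(2α)` the recursion reads `u n = ⌈(√(u (n-1)) + c)²⌉`, so `√u` grows by at least `c`
per step and never drops below its initial value `√(u 1) ≥ α - c/2`. Hence
`u n - u (n-1) ≥ 2c·√(u (n-1)) + c² ≥ 2c(α - c/2) + c² = 2cα = K`.
-/

open Real

theorem sqrt_add_le_sqrt_of_add_two_mul_sqrt_add_sq_le {c x y : ℝ} (hx : 0 ≤ x)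
    (h : x + 2 * c * √x + c ^ 2 ≤ y) : √x + c ≤ √y := by
  have hsq : (√x + c) ^ 2 = x + 2 * c * √x + c ^ 2 := by
    rw [add_sq, sq_sqrt hx]; ring
  exact le_sqrt_of_sq_le (hsq ▸ h)

theorem nonneg_and_le_sqrt_of_sq_add_step_le {a c : ℝ} {v : ℕ → ℝ} (hc : 0 ≤ c)
    (h1 : a ^ 2 ≤ v 1) (hstep : ∀ n, 1 ≤ n → v n + 2 * c * √(v n) + c ^ 2 ≤ v (n + 1)) :
    ∀ n, 1 ≤ n → 0 ≤ v n ∧ a ≤ √(v n) := by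
  intro n hn
  induction n, hn using Nat.le_induction with
  | base => exact ⟨(sq_nonneg a).trans h1, le_sqrt_of_sq_le h1⟩
  | succ n hn ih =>
    obtain ⟨hv, ha⟩ := ih
    have h := hstep n hn
    exact ⟨(by positivity : 0 ≤ v n + 2 * c * √(v n) + c ^ 2).trans h,
      by linarith [sqrt_add_le_sqrt_of_add_two_mul_sqrt_add_sq_le hv h]⟩

theorem add_mul_two_mul_add_le_of_le_sqrt {a c x y : ℝ} (hc : 0 ≤ c) (ha : a ≤ √x)
    (h : x + 2 * c * √x + c ^ 2 ≤ y) : x + c * (2 * a + c) ≤ y := by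
  nlinarith [mul_le_mul_of_nonneg_left ha hc]

/-- For the diminishing-exploration schedule `u` (with parameters
`K ≥ 1`, `α > 0`, `u 1 = ⌈(α − K/(4α))²⌉` and
`u n = ⌈u (n−1) + (K/α)·√(u (n−1)) + K²/(4α²)⌉` for `n ≥ 2`), one has
`u n ≥ u (n−1) + K` for every `n ≥ 2`: consecutive exploration phases, each of
length `K`, do not overlap. -/
theorem diminishing_exploration_phases_do_not_overlap
    (K α : ℝ) (hK : 1 ≤ K) (hα : 0 < α) (u : ℕ → ℝ)
    (h1 : u 1 = ((⌈(α - K / (4 * α)) ^ 2⌉ : ℤ) : ℝ))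
    (hrec : ∀ n : ℕ, 2 ≤ n →
      u n = ((⌈u (n - 1) + (K / α) * Real.sqrt (u (n - 1)) + K ^ 2 / (4 * α ^ 2)⌉ : ℤ) : ℝ)) :
    ∀ n : ℕ, 2 ≤ n → u (n - 1) + K ≤ u n := by
  set c := K / (2 * α) with hc_def
  have hc : 0 ≤ c := div_nonneg (by linarith) (by positivity)
  have hstep : ∀ n, 1 ≤ n → u n + 2 * c * √(u n) + c ^ 2 ≤ u (n + 1) := by
    intro n hn
    have hK_div : K / α = 2 * c := by rw [hc_def]; field_simp
    have hK_sq : K ^ 2 / (4 * α ^ 2) = c ^ 2 := by rw [hc_def]; field_simp; ring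
    rw [hrec (n + 1) (by omega), Nat.add_sub_cancel, hK_div, hK_sq]
    exact Int.le_ceil _
  have hinv := nonneg_and_le_sqrt_of_sq_add_step_le hc (h1 ▸ Int.le_ceil _) hstep
  intro n hn
  obtain ⟨m, rfl⟩ : ∃ m, n = m + 1 := ⟨n - 1, by omega⟩
  have hK_eq : c * (2 * (α - K / (4 * α)) + c) = K := by rw [hc_def]; field_simp; ring
  simpa only [Nat.add_sub_cancel, hK_eq] using
    add_mul_two_mul_add_le_of_le_sqrt hc (hinv m (by omega)).2 (hstep m (by omega))
end

section
/- For every n ≥ 1, the diminishing-exploration schedule satisfies u_n ≥ ((2n−3)·K/(4α) + α)². -/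
/-- For the diminishing-exploration schedule `u` (with parameters
`K ≥ 1`, `α > 0`, `u 1 = ⌈(α − K/(4α))²⌉` and
`u n = ⌈u (n−1) + (K/α)·√(u (n−1)) + K²/(4α²)⌉` for `n ≥ 2`), one has
`u n ≥ ((2n−3)·K/(4α) + α)²` for every `n ≥ 1`. -/
theorem diminishing_exploration_lower_bound
    (K α : ℝ) (hK : 1 ≤ K) (hα : 0 < α) (u : ℕ → ℝ)
    (h1 : u 1 = ((⌈(α - K / (4 * α)) ^ 2⌉ : ℤ) : ℝ))
    (hrec : ∀ n : ℕ, 2 ≤ n →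
      u n = ((⌈u (n - 1) + (K / α) * Real.sqrt (u (n - 1)) + K ^ 2 / (4 * α ^ 2)⌉ : ℤ) : ℝ)) :
    ∀ n : ℕ, 1 ≤ n → ((2 * (n : ℝ) - 3) * K / (4 * α) + α) ^ 2 ≤ u n := by
  intro n hn
  induction n, hn using Nat.le_induction with
  | base =>
    rw [h1]
    have : ((2 * (1 : ℝ) - 3) * K / (4 * α) + α) ^ 2 = (α - K / (4 * α)) ^ 2 := by ring
    rw [Nat.cast_one, this]
    exact Int.le_ceil _
  | succ n hn ih =>
    have hrec' := hrec (n + 1) (by omega)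
    simp only [Nat.add_sub_cancel] at hrec'
    rw [hrec']
    set b : ℝ := (2 * (n : ℝ) - 3) * K / (4 * α) + α with hb
    clear_value b
    have hnn : (0 : ℝ) ≤ u n := le_trans (sq_nonneg b) ih
    have hsq : b ≤ Real.sqrt (u n) := by
      have h1 : Real.sqrt (b ^ 2) ≤ Real.sqrt (u n) := Real.sqrt_le_sqrt ih
      rw [Real.sqrt_sq_eq_abs] at h1
      exact le_trans (le_abs_self b) h1
    have hKα : 0 < K / α := div_pos (by linarith) hα
    have key : (b + K / (2 * α)) ^ 2 ≤ u n + (K / α) * Real.sqrt (u n) + K ^ 2 / (4 * α ^ 2) := by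
      have hexp : (b + K / (2 * α)) ^ 2 = b ^ 2 + (K / α) * b + K ^ 2 / (4 * α ^ 2) := by
        field_simp
        ring
      rw [hexp]
      have h2 : (K / α) * b ≤ (K / α) * Real.sqrt (u n) :=
        mul_le_mul_of_nonneg_left hsq (le_of_lt hKα)
      linarith
    have htarget : ((2 * ((n : ℝ) + 1) - 3) * K / (4 * α) + α) ^ 2 = (b + K / (2 * α)) ^ 2 := by
      rw [hb]
      field_simp
      ring
    rw [Nat.cast_add, Nat.cast_one, htarget]
    exact le_trans key (Int.le_ceil _)
end

section
/- Let m ≥ 1 be an integer and x > 0 a real number with u_m ≤ x. Then m·K ≤ 2α·√x − 2α² + (3/2)·K; in particular m ≤ (2α·√x)/K + 3/2. (Consequently, if at most m full exploration phases, each comprising K forced pulls with per-pull regret at most 1, start before time x, the exploration regret on [1, x] is at most 2α√x + (3/2)K and each arm is pulled at most (2α√x)/K + 3/2 times during exploration.) -/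
/-!
With `c = K / (2α)` the recursion reads `u n ≥ (√(u (n-1)) + c) ^ 2`, so `√(u n)` grows by at
least `c` per step, starting from `√(u 1) ≥ α - c / 2`. Hence `√x ≥ √(u m) ≥ α + (m - 3/2) c`,
which after multiplying by `2α` is the first bound; dividing by `K` gives the second.
-/

section SqrtGrowth

variable {v : ℕ → ℝ} {c : ℝ} (hc : 0 ≤ c) (hstep : ∀ n, v n + 2 * c * √(v n) + c ^ 2 ≤ v (n + 1))
include hc hstep

theorem monotone_of_add_sqrt_le : Monotone v :=
  monotone_nat_of_le_succ fun n => by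
    have := hstep n
    nlinarith [Real.sqrt_nonneg (v n), sq_nonneg c]

theorem sqrt_add_mul_le_sqrt_of_add_sqrt_le (h0 : 0 ≤ v 0) (n : ℕ) :
    √(v 0) + n * c ≤ √(v n) := by
  induction n with
  | zero => simp
  | succ n ih =>
    have hvn : 0 ≤ v n := h0.trans (monotone_of_add_sqrt_le hc hstep (Nat.zero_le n))
    have hsq : (√(v n) + c) ^ 2 = v n + 2 * c * √(v n) + c ^ 2 := by
      linear_combination Real.sq_sqrt hvn
    have := Real.le_sqrt_of_sq_le (hsq.trans_le (hstep n))
    push_cast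
    linarith

end SqrtGrowth

theorem sqrt_schedule_lower_bound {K α : ℝ} (hK : 0 ≤ K) (hα : 0 ≤ α) {u : ℕ → ℝ}
    (h1 : u 1 = ((⌈(α - K / (4 * α)) ^ 2⌉ : ℤ) : ℝ))
    (hrec : ∀ n : ℕ, 2 ≤ n →
      u n = ((⌈u (n - 1) + (K / α) * Real.sqrt (u (n - 1)) + K ^ 2 / (4 * α ^ 2)⌉ : ℤ) : ℝ))
    {m : ℕ} (hm : 1 ≤ m) :
    α + ((m : ℝ) - 3 / 2) * (K / (2 * α)) ≤ √(u m) := by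
  set c := K / (2 * α)
  have hc : 0 ≤ c := by positivity
  have hu1 : (α - c / 2) ^ 2 ≤ u 1 := by
    rw [h1, show c / 2 = K / (4 * α) by ring]
    exact Int.le_ceil _
  have hstep : ∀ n, u (n + 1) + 2 * c * √(u (n + 1)) + c ^ 2 ≤ u (n + 1 + 1) := fun n => by
    rw [hrec (n + 1 + 1) (by omega), Nat.add_sub_cancel,
      show 2 * c = K / α by ring, show c ^ 2 = K ^ 2 / (4 * α ^ 2) by ring]
    exact Int.le_ceil _
  obtain ⟨n, rfl⟩ := Nat.exists_eq_add_of_le' hm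
  have hgrowth := sqrt_add_mul_le_sqrt_of_add_sqrt_le hc hstep ((sq_nonneg _).trans hu1) n
  have hstart := Real.le_sqrt_of_sq_le hu1
  push_cast at hgrowth ⊢
  linarith

theorem diminishing_exploration_count_bound_general
    (K α : ℝ) (hK : 1 ≤ K) (hα : 0 < α) (u : ℕ → ℝ)
    (h1 : u 1 = ((⌈(α - K / (4 * α)) ^ 2⌉ : ℤ) : ℝ))
    (hrec : ∀ n : ℕ, 2 ≤ n →
      u n = ((⌈u (n - 1) + (K / α) * Real.sqrt (u (n - 1)) + K ^ 2 / (4 * α ^ 2)⌉ : ℤ) : ℝ))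
    (m : ℕ) (hm : 1 ≤ m) (x : ℝ) (hux : u m ≤ x) :
    (m : ℝ) * K ≤ 2 * α * Real.sqrt x - 2 * α ^ 2 + (3 / 2) * K ∧
      (m : ℝ) ≤ (2 * α * Real.sqrt x) / K + 3 / 2 := by
  have hK0 : 0 < K := one_pos.trans_le hK
  have hsqrt : α + ((m : ℝ) - 3 / 2) * (K / (2 * α)) ≤ √x :=
    (sqrt_schedule_lower_bound hK0.le hα.le h1 hrec hm).trans (Real.sqrt_le_sqrt hux)
  have hbound : (m : ℝ) * K ≤ 2 * α * √x - 2 * α ^ 2 + (3 / 2) * K := by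
    have := mul_le_mul_of_nonneg_left hsqrt (by positivity : (0 : ℝ) ≤ 2 * α)
    have hcancel : 2 * α * (K / (2 * α)) = K := by field_simp
    nlinarith
  refine ⟨hbound, ?_⟩
  rw [div_add' _ _ _ hK0.ne', le_div_iff₀ hK0]
  nlinarith [sq_nonneg α]

/-- For the diminishing-exploration schedule `u` (with parameters
`K ≥ 1`, `α > 0`), if `m ≥ 1` and `x > 0` satisfy `u m ≤ x`, then
`m·K ≤ 2α·√x − 2α² + (3/2)·K`, and in particular `m ≤ (2α·√x)/K + 3/2`. -/
theorem diminishing_exploration_count_bound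
    (K α : ℝ) (hK : 1 ≤ K) (hα : 0 < α) (u : ℕ → ℝ)
    (h1 : u 1 = ((⌈(α - K / (4 * α)) ^ 2⌉ : ℤ) : ℝ))
    (hrec : ∀ n : ℕ, 2 ≤ n →
      u n = ((⌈u (n - 1) + (K / α) * Real.sqrt (u (n - 1)) + K ^ 2 / (4 * α ^ 2)⌉ : ℤ) : ℝ))
    (m : ℕ) (hm : 1 ≤ m) (x : ℝ) (hx : 0 < x) (hux : u m ≤ x) :
    (m : ℝ) * K ≤ 2 * α * Real.sqrt x - 2 * α ^ 2 + (3 / 2) * K ∧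
      (m : ℝ) ≤ (2 * α * Real.sqrt x) / K + 3 / 2 :=
  diminishing_exploration_count_bound_general K α hK hα u h1 hrec m hm x hux
end

section
/- For all integers j ≥ 1 and n ≥ 0, the diminishing-exploration schedule satisfies u_{j+n} ≤ (√(u_j) + n·(K/(2α) + 1))². -/
/-!
With `c = K / (2α)` the recursion reads `u_{n+1} = ⌈(√u_n + c)²⌉`, and a ceiling adds less than
`1 ≤ 2(√u_n + c) + 1`, so `u_{n+1} ≤ (√u_n + c + 1)²`: the square root of the schedule grows by
at most `c + 1` per step.
-/

open Real

theorem le_sq_sqrt_add_mul_of_le_sq_sqrt_add {v : ℕ → ℝ} {d : ℝ} {j : ℕ} (hd : 0 ≤ d)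
    (hvj : 0 ≤ v j) (hstep : ∀ m, j ≤ m → v (m + 1) ≤ (√(v m) + d) ^ 2) (n : ℕ) :
    v (j + n) ≤ (√(v j) + n * d) ^ 2 := by
  induction n with
  | zero => simp [sq_sqrt hvj]
  | succ n ih =>
    have hsqrt : √(v (j + n)) ≤ √(v j) + n * d := by
      simpa only [sqrt_sq (by positivity : 0 ≤ √(v j) + n * d)] using sqrt_le_sqrt ih
    calc v (j + (n + 1)) ≤ (√(v (j + n)) + d) ^ 2 := hstep (j + n) (Nat.le_add_right j n)
      _ ≤ (√(v j) + n * d + d) ^ 2 := by gcongr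
      _ = (√(v j) + ↑(n + 1) * d) ^ 2 := by push_cast; ring

theorem Int.ceil_sq_le_add_one_sq {s : ℝ} (hs : 0 ≤ s) : (⌈s ^ 2⌉ : ℝ) ≤ (s + 1) ^ 2 := by
  nlinarith [Int.ceil_lt_add_one (s ^ 2)]

noncomputable def explorationStep (K α x : ℝ) : ℝ :=
  ⌈x + (K / α) * √x + K ^ 2 / (4 * α ^ 2)⌉

section explorationStep

variable {K α x : ℝ}

theorem explorationStep_eq_ceil_sq (hα : α ≠ 0) (hx : 0 ≤ x) :
    explorationStep K α x = ⌈(√x + K / (2 * α)) ^ 2⌉ := by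
  have hsq : (√x + K / (2 * α)) ^ 2 = x + (K / α) * √x + K ^ 2 / (4 * α ^ 2) := by
    rw [add_sq, sq_sqrt hx]
    field_simp
    ring
  rw [explorationStep, hsq]

theorem explorationStep_nonneg (hα : α ≠ 0) (hx : 0 ≤ x) : 0 ≤ explorationStep K α x := by
  rw [explorationStep_eq_ceil_sq hα hx]
  exact Int.cast_nonneg_iff.mpr (Int.ceil_nonneg (sq_nonneg _))

theorem explorationStep_le (hK : 0 ≤ K) (hα : 0 < α) (hx : 0 ≤ x) :
    explorationStep K α x ≤ (√x + (K / (2 * α) + 1)) ^ 2 := by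
  rw [explorationStep_eq_ceil_sq hα.ne' hx, ← add_assoc]
  exact Int.ceil_sq_le_add_one_sq (by positivity)

end explorationStep

/-- For the diminishing-exploration schedule `u` (with parameters
`K ≥ 1`, `α > 0`), for all `j ≥ 1` and `n ≥ 0` one has
`u (j+n) ≤ (√(u j) + n·(K/(2α) + 1))²`. -/
theorem diminishing_exploration_iterated_upper_bound
    (K α : ℝ) (hK : 1 ≤ K) (hα : 0 < α) (u : ℕ → ℝ)
    (h1 : u 1 = ((⌈(α - K / (4 * α)) ^ 2⌉ : ℤ) : ℝ))
    (hrec : ∀ n : ℕ, 2 ≤ n →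
      u n = ((⌈u (n - 1) + (K / α) * Real.sqrt (u (n - 1)) + K ^ 2 / (4 * α ^ 2)⌉ : ℤ) : ℝ)) :
    ∀ j : ℕ, 1 ≤ j → ∀ n : ℕ,
      u (j + n) ≤ (Real.sqrt (u j) + (n : ℝ) * (K / (2 * α) + 1)) ^ 2 := by
  intro j hj
  have hsucc : ∀ m, 1 ≤ m → u (m + 1) = explorationStep K α (u m) :=
    fun m hm => hrec (m + 1) (by omega)
  have hnonneg : ∀ m, 1 ≤ m → 0 ≤ u m := by
    refine Nat.le_induction ?_ fun m hm hum => ?_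
    · rw [h1]
      exact Int.cast_nonneg_iff.mpr (Int.ceil_nonneg (sq_nonneg _))
    · exact hsucc m hm ▸ explorationStep_nonneg hα.ne' hum
  refine le_sq_sqrt_add_mul_of_le_sq_sqrt_add (by positivity) (hnonneg j hj) fun m hm => ?_
  rw [hsucc m (hj.trans hm)]
  exact explorationStep_le (zero_le_one.trans hK) hα (hnonneg m (hj.trans hm))
end

section
/- Assume additionally α ≥ √K/2. Then for every n ≥ 1 one has u_n ≤ (α + (2n−3)·K/(4α) + n)², and hence the total time needed after a reset until every one of the K arms has accumulated n exploration samples satisfies u_n + K ≤ (α + (2n−3)·K/(4α) + n)² + K. -/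
/-! Writing `c = K/(4α)`, the recursion reads `u_n = ⌈(√u_{n-1} + 2c)²⌉ ≤ (√u_{n-1} + 2c)² + 1`,
and `(b + 2c)² + 1 ≤ (b + 2c + 1)²` for `b ≥ 0`. So a bound `√u_n ≤ b` propagates to
`√u_{n+1} ≤ b + 2c + 1`, starting from `√u_1 ≤ α - c + 1`, which is nonnegative because
`α ≥ √K/2` means `c ≤ α`. -/

open Real

lemma ceil_add_two_mul_sqrt_add_sq_le (x d : ℝ) :
    ((⌈x + 2 * d * √x + d ^ 2⌉ : ℤ) : ℝ) ≤ (√x + d) ^ 2 + 1 := by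
  have hceil := (Int.ceil_lt_add_one (x + 2 * d * √x + d ^ 2)).le
  have hx : x ≤ √x ^ 2 := (sq_sqrt' (x := x)) ▸ le_max_left x 0
  nlinarith

lemma le_sq_of_le_sqrt_add_sq_add_one {u : ℕ → ℝ} {b d : ℝ} (hb : 0 ≤ b) (hd : 0 ≤ d)
    (h1 : u 1 ≤ b ^ 2) (hstep : ∀ n, 1 ≤ n → u (n + 1) ≤ (√(u n) + d) ^ 2 + 1) :
    ∀ n, 1 ≤ n → u n ≤ (b + (n - 1) * (d + 1)) ^ 2 := by
  intro n hn
  induction n, hn using Nat.le_induction with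
  | base => simpa using h1
  | succ n hn ih =>
    have hB : 0 ≤ b + (n - 1) * (d + 1) := by
      have : (1 : ℝ) ≤ n := by exact_mod_cast hn
      positivity
    have hsqrt : √(u n) ≤ b + (n - 1) * (d + 1) := (sqrt_le_left hB).mpr ih
    calc u (n + 1) ≤ (√(u n) + d) ^ 2 + 1 := hstep n hn
      _ ≤ (b + (n - 1) * (d + 1) + d) ^ 2 + 1 := by gcongr
      _ ≤ (b + ((n + 1 : ℕ) - 1) * (d + 1)) ^ 2 := by push_cast; nlinarith

lemma div_four_mul_le_of_sqrt_div_two_le {K α : ℝ} (hα : 0 < α) (h : √K / 2 ≤ α) :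
    K / (4 * α) ≤ α := by
  have hK : K ≤ (2 * α) ^ 2 := (sqrt_le_left (by positivity)).mp (by linarith)
  rw [div_le_iff₀ (by positivity)]
  nlinarith

/-- For the diminishing-exploration schedule `u` (with parameters
`K ≥ 1`, `α > 0`), if additionally `α ≥ √K/2`, then for every `n ≥ 1` one has
`u n ≤ (α + (2n−3)·K/(4α) + n)²`, and hence the total time needed after a reset
until every one of the `K` arms has accumulated `n` exploration samples satisfies
`u n + K ≤ (α + (2n−3)·K/(4α) + n)² + K`. -/
theorem diminishing_exploration_reset_time_bound
    (K α : ℝ) (hK : 1 ≤ K) (hα : 0 < α) (hα' : Real.sqrt K / 2 ≤ α) (u : ℕ → ℝ)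
    (h1 : u 1 = ((⌈(α - K / (4 * α)) ^ 2⌉ : ℤ) : ℝ))
    (hrec : ∀ n : ℕ, 2 ≤ n →
      u n = ((⌈u (n - 1) + (K / α) * Real.sqrt (u (n - 1)) + K ^ 2 / (4 * α ^ 2)⌉ : ℤ) : ℝ)) :
    ∀ n : ℕ, 1 ≤ n →
      u n ≤ (α + (2 * (n : ℝ) - 3) * K / (4 * α) + n) ^ 2 ∧
      u n + K ≤ (α + (2 * (n : ℝ) - 3) * K / (4 * α) + n) ^ 2 + K := by
  set c := K / (4 * α) with hc
  have hc0 : 0 ≤ c := by positivity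
  have hcα : c ≤ α := div_four_mul_le_of_sqrt_div_two_le hα hα'
  have hbase : u 1 ≤ (α - c + 1) ^ 2 := by
    have := (Int.ceil_lt_add_one ((α - c) ^ 2)).le
    rw [h1]
    nlinarith
  have hstep : ∀ n, 1 ≤ n → u (n + 1) ≤ (√(u n) + 2 * c) ^ 2 + 1 := by
    intro n hn
    have hcoeffs : K / α = 2 * (2 * c) ∧ K ^ 2 / (4 * α ^ 2) = (2 * c) ^ 2 := by
      constructor <;> (rw [hc]; field_simp; ring)
    rw [hrec (n + 1) (by omega), Nat.add_sub_cancel, hcoeffs.1, hcoeffs.2]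
    exact ceil_add_two_mul_sqrt_add_sq_le _ _
  intro n hn
  have hbound := le_sq_of_le_sqrt_add_sq_add_one (by linarith) (by positivity) hbase hstep n hn
  have hform : α - c + 1 + (n - 1) * (2 * c + 1) = α + (2 * (n : ℝ) - 3) * K / (4 * α) + n := by
    rw [hc]; ring
  rw [hform] at hbound
  exact ⟨hbound, by linarith⟩
end

section
/- Let x ≥ 0 and n ≥ 0 be integers and t_d ≥ 0 a real number, and suppose u_{x+1} = t_d + 1. Then u_{x+n+1} − u_{x+1} ≤ 2n·(K/(2α) + 1)·√(t_d + 1) + n²·(K/(2α) + 1)²; that is, after a delay of t_d time steps following a reset, each arm accumulates n further exploration samples within 2n(K/(2α)+1)√(t_d+1) + n²(K/(2α)+1)² additional time steps. -/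
/-!
Write `b = K/(2α)`. One step of the schedule is `v ↦ ⌈(√v + b)²⌉`, and rounding up adds less
than `1 ≤ 2(√v + b) + 1`, so `√` of the next term is at most `√v + b + 1`. Hence `√u` grows
by at most `n(b + 1)` in `n` steps, and squaring gives the bound.
-/

open Real

theorem sqrt_ceil_add_mul_sqrt_add_sq_le (v b : ℝ) (hb : 0 ≤ b) :
    √(⌈v + 2 * b * √v + b ^ 2⌉ : ℝ) ≤ √v + b + 1 := by
  have hv : v ≤ √v ^ 2 := sq_sqrt' (x := v) ▸ le_max_left v 0
  refine (sqrt_le_left (by positivity)).2 ?_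
  calc (⌈v + 2 * b * √v + b ^ 2⌉ : ℝ) ≤ v + 2 * b * √v + b ^ 2 + 1 :=
        (Int.ceil_lt_add_one _).le
    _ ≤ (√v + b + 1) ^ 2 := by nlinarith [sqrt_nonneg v]

theorem le_add_mul_of_forall_succ_le_add {f : ℕ → ℝ} {c : ℝ}
    (hf : ∀ m, f (m + 1) ≤ f m + c) (x n : ℕ) : f (x + n) ≤ f x + n * c := by
  induction n with
  | zero => simp
  | succ n ih =>
    calc f (x + (n + 1)) ≤ f (x + n) + c := hf (x + n)
      _ ≤ f x + (n + 1 : ℕ) * c := by push_cast; linarith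

theorem sub_le_of_sqrt_le_sqrt_add {w a d : ℝ} (ha : 0 ≤ a) (h : √w ≤ √a + d) :
    w - a ≤ 2 * d * √a + d ^ 2 := by
  have hw : w ≤ (√a + d) ^ 2 := (sqrt_le_iff.1 h).2
  nlinarith [sq_sqrt ha]

theorem diminishing_exploration_delay_bound_general
    (K α : ℝ) (hK : 1 ≤ K) (hα : 0 < α) (u : ℕ → ℝ)
    (hrec : ∀ n : ℕ, 2 ≤ n →
      u n = ((⌈u (n - 1) + (K / α) * Real.sqrt (u (n - 1)) + K ^ 2 / (4 * α ^ 2)⌉ : ℤ) : ℝ))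
    (x n : ℕ) (td : ℝ) (htd : 0 ≤ td) (hstart : u (x + 1) = td + 1) :
    u (x + n + 1) - u (x + 1) ≤
      2 * (n : ℝ) * (K / (2 * α) + 1) * Real.sqrt (td + 1) +
        (n : ℝ) ^ 2 * (K / (2 * α) + 1) ^ 2 := by
  have hstep : ∀ m, √(u (m + 1 + 1)) ≤ √(u (m + 1)) + (K / (2 * α) + 1) := fun m ↦ by
    have hsched : u (m + 1 + 1) =
        ⌈u (m + 1) + 2 * (K / (2 * α)) * √(u (m + 1)) + (K / (2 * α)) ^ 2⌉ := by
      rw [hrec (m + 1 + 1) (by omega), Nat.add_sub_cancel]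
      congr 3
      field_simp
      ring
    rw [hsched, ← add_assoc]
    exact sqrt_ceil_add_mul_sqrt_add_sq_le _ _ (div_nonneg (by linarith) (by positivity))
  have hsqrt := le_add_mul_of_forall_succ_le_add (f := fun m ↦ √(u (m + 1))) hstep x n
  rw [hstart] at hsqrt ⊢
  exact (sub_le_of_sqrt_le_sqrt_add (by linarith) hsqrt).trans_eq (by ring)

/-- For the diminishing-exploration schedule `u` (with parameters
`K ≥ 1`, `α > 0`), if `x ≥ 0` and `n ≥ 0` are integers, `t_d ≥ 0` is a real, and
`u (x+1) = t_d + 1`, then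
`u (x+n+1) − u (x+1) ≤ 2n·(K/(2α) + 1)·√(t_d + 1) + n²·(K/(2α) + 1)²`. -/
theorem diminishing_exploration_delay_bound
    (K α : ℝ) (hK : 1 ≤ K) (hα : 0 < α) (u : ℕ → ℝ)
    (h1 : u 1 = ((⌈(α - K / (4 * α)) ^ 2⌉ : ℤ) : ℝ))
    (hrec : ∀ n : ℕ, 2 ≤ n →
      u n = ((⌈u (n - 1) + (K / α) * Real.sqrt (u (n - 1)) + K ^ 2 / (4 * α ^ 2)⌉ : ℤ) : ℝ))
    (x n : ℕ) (td : ℝ) (htd : 0 ≤ td) (hstart : u (x + 1) = td + 1) :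
    u (x + n + 1) - u (x + 1) ≤
      2 * (n : ℝ) * (K / (2 * α) + 1) * Real.sqrt (td + 1) +
        (n : ℝ) ^ 2 * (K / (2 * α) + 1) ^ 2 :=
  diminishing_exploration_delay_bound_general K α hK hα u hrec x n td htd hstart
end

section
/- Let w be an even positive integer, let Z_1, …, Z_{w/2} be independent random variables with values in [0,1] and common mean μ₁, let Z_{w/2+1}, …, Z_w be independent random variables with values in [0,1] and common mean μ₂, with all w variables mutually independent, and suppose |μ₂ − μ₁| ≥ δ. If b > 0 and c > 0 satisfy δ ≥ 2b/w + c, then ℙ(|S| > b) ≥ 1 − 2·exp(−w·c²/4), where S = Σ_{ℓ=w/2+1}^{w} Z_ℓ − Σ_{ℓ=1}^{w/2} Z_ℓ. -/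
/-!
The statistic `S` is a `±1`-signed sum of `w` independent `[0, 1]`-valued variables, so by
Hoeffding's inequality it deviates from its mean `(w / 2) (μ₂ - μ₁)` by at least `w c / 2` with
probability at most `2 exp (-w c² / 2)`. The detection condition puts the mean at distance at least
`b + w c / 2` from the origin, so `|S| ≤ b` forces such a deviation.
-/

open MeasureTheory ProbabilityTheory Finset Real
open scoped NNReal

namespace ProbabilityTheory

section Hoeffding

variable {Ω ι : Type*} {mΩ : MeasurableSpace Ω} {μ : Measure Ω}

lemma HasSubgaussianMGF.measure_abs_ge_le [IsFiniteMeasure μ] {X : Ω → ℝ} {c : ℝ≥0}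
    (h : HasSubgaussianMGF X c μ) {ε : ℝ} (hε : 0 ≤ ε) :
    μ.real {ω | ε ≤ |X ω|} ≤ 2 * exp (-ε ^ 2 / (2 * c)) :=
  calc μ.real {ω | ε ≤ |X ω|}
      ≤ μ.real ({ω | ε ≤ X ω} ∪ {ω | ε ≤ (-X) ω}) :=
        measureReal_mono fun ω (hω : ε ≤ |X ω|) ↦
          (le_abs'.1 hω).symm.imp id fun h : X ω ≤ -ε ↦ show ε ≤ -X ω by linarith
    _ ≤ μ.real {ω | ε ≤ X ω} + μ.real {ω | ε ≤ (-X) ω} := measureReal_union_le _ _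
    _ ≤ 2 * exp (-ε ^ 2 / (2 * c)) := by
        linarith [h.measure_ge_le hε, h.neg.measure_ge_le hε]

variable [IsProbabilityMeasure μ]

lemma hasSubgaussianMGF_sum_sign_mul_sub_integral {Z : ι → Ω → ℝ} (hindep : iIndepFun Z μ)
    (hmeas : ∀ i, AEMeasurable (Z i) μ) {a b : ℝ} (hbdd : ∀ i, ∀ᵐ ω ∂μ, Z i ω ∈ Set.Icc a b)
    {ε : ι → ℝ} (hε : ∀ i, ε i ^ 2 = 1) (s : Finset ι) :
    HasSubgaussianMGF (fun ω ↦ ∑ i ∈ s, ε i * (Z i ω - μ[Z i])) (#s * (‖b - a‖₊ / 2) ^ 2) μ := by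
  have hindep' : iIndepFun (fun i ω ↦ ε i * (Z i ω - μ[Z i])) μ :=
    hindep.comp (fun i x ↦ ε i * (x - ∫ ω, Z i ω ∂μ)) fun _ ↦ by fun_prop
  rw [← nsmul_eq_mul, ← sum_const]
  refine HasSubgaussianMGF.sum_of_iIndepFun hindep' fun i _ ↦ ?_
  convert (hasSubgaussianMGF_of_mem_Icc (hmeas i) (hbdd i)).const_mul (ε i) using 1
  ext
  change _ = ε i ^ 2 * (((‖b - a‖₊ / 2) ^ 2 : ℝ≥0) : ℝ)
  rw [hε, one_mul]

lemma measure_abs_sum_sign_mul_sub_integral_ge_le {Z : ι → Ω → ℝ} {s : Finset ι}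
    (hindep : iIndepFun (fun i : s ↦ Z i) μ) (hmeas : ∀ i ∈ s, AEMeasurable (Z i) μ)
    (hbdd : ∀ i ∈ s, ∀ᵐ ω ∂μ, Z i ω ∈ Set.Icc 0 1) {ε : ι → ℝ} (hε : ∀ i ∈ s, ε i ^ 2 = 1)
    {t : ℝ} (ht : 0 ≤ t) :
    μ.real {ω | t ≤ |∑ i ∈ s, ε i * (Z i ω - μ[Z i])|} ≤ 2 * exp (-2 * t ^ 2 / #s) := by
  have h := (hasSubgaussianMGF_sum_sign_mul_sub_integral hindep (fun i ↦ hmeas i i.2)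
    (fun i ↦ hbdd i i.2) (fun i ↦ hε i i.2) univ).measure_abs_ge_le ht
  have hparam : ((#(univ : Finset s) * (‖(1 : ℝ) - 0‖₊ / 2) ^ 2 : ℝ≥0) : ℝ) = #s / 4 := by
    simp; ring
  have hsum (ω : Ω) : ∑ i : s, ε i * (Z i ω - μ[Z i]) = ∑ i ∈ s, ε i * (Z i ω - μ[Z i]) :=
    sum_coe_sort s fun i ↦ ε i * (Z i ω - ∫ x, Z i x ∂μ)
  simp only [hparam, hsum] at h
  rwa [show -t ^ 2 / (2 * (#s / 4 : ℝ)) = -2 * t ^ 2 / #s by ring] at h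

end Hoeffding

lemma one_sub_le_measureReal_lt_abs {Ω : Type*} {_ : MeasurableSpace Ω} {μ : Measure Ω}
    [IsProbabilityMeasure μ] {S : Ω → ℝ} {s₀ b t q : ℝ} (hs₀ : b + t ≤ |s₀|)
    (htail : μ.real {ω | t ≤ |S ω - s₀|} ≤ q) : 1 - q ≤ μ.real {ω | b < |S ω|} := by
  have hsub : {ω | b < |S ω|}ᶜ ⊆ {ω | t ≤ |S ω - s₀|} := fun ω (hω : ¬ b < |S ω|) ↦ by
    have := abs_sub_abs_le_abs_sub s₀ (S ω)
    rw [abs_sub_comm] at this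
    show t ≤ |S ω - s₀|
    linarith
  have hcover := measureReal_union_le (μ := μ) {ω | b < |S ω|} {ω | b < |S ω|}ᶜ
  rw [Set.union_compl_self, probReal_univ] at hcover
  linarith [measureReal_mono (μ := μ) hsub]

end ProbabilityTheory

lemma sum_Icc_sub_sum_Icc_eq_sum_sign_mul {R : Type*} [CommRing R] {m n : ℕ} (hmn : m ≤ n)
    (f : ℕ → R) :
    ∑ ℓ ∈ Icc (m + 1) n, f ℓ - ∑ ℓ ∈ Icc 1 m, f ℓ =
      ∑ ℓ ∈ Icc 1 n, (if ℓ ≤ m then -1 else 1) * f ℓ := by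
  have hle : (Icc 1 n).filter (· ≤ m) = Icc 1 m := by ext; simp; omega
  have hgt : (Icc 1 n).filter (fun ℓ ↦ ¬ ℓ ≤ m) = Icc (m + 1) n := by ext; simp; omega
  simp only [ite_mul, neg_one_mul, one_mul, sum_ite, hle, hgt, sum_neg_distrib]
  abel

lemma sum_Icc_sign_mul_sub_eq {R : Type*} [CommRing R] (m : ℕ) (f g : ℕ → R) {a₁ a₂ : R}
    (h₁ : ∀ ℓ ∈ Icc 1 m, g ℓ = a₁) (h₂ : ∀ ℓ ∈ Icc (m + 1) (m + m), g ℓ = a₂) :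
    ∑ ℓ ∈ Icc 1 (m + m), (if ℓ ≤ m then -1 else 1) * (f ℓ - g ℓ) =
      (∑ ℓ ∈ Icc (m + 1) (m + m), f ℓ - ∑ ℓ ∈ Icc 1 m, f ℓ) - m * (a₂ - a₁) := by
  have hcard : #(Icc (m + 1) (m + m)) = m := by simp
  simp only [mul_sub, sum_sub_distrib,
    ← sum_Icc_sub_sum_Icc_eq_sum_sign_mul (by omega : m ≤ m + m), sum_congr rfl h₁,
    sum_congr rfl h₂, sum_const, hcard, Nat.card_Icc, Nat.add_sub_cancel,
    nsmul_eq_mul]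

theorem mucb_successful_detection_general
    {Ω : Type*} [MeasurableSpace Ω] (P : Measure Ω) [IsProbabilityMeasure P]
    (w : ℕ) (hw : 0 < w) (hweven : Even w)
    (Z : ℕ → Ω → ℝ) (μ₁ μ₂ δ : ℝ)
    (hmeas : ∀ ℓ ∈ Finset.Icc 1 w, Measurable (Z ℓ))
    (hbdd : ∀ ℓ ∈ Finset.Icc 1 w, ∀ᵐ ω ∂P, Z ℓ ω ∈ Set.Icc (0 : ℝ) 1)
    (hmean₁ : ∀ ℓ ∈ Finset.Icc 1 (w / 2), ∫ ω, Z ℓ ω ∂P = μ₁)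
    (hmean₂ : ∀ ℓ ∈ Finset.Icc (w / 2 + 1) w, ∫ ω, Z ℓ ω ∂P = μ₂)
    (hindep : iIndepFun
      (fun ℓ : Finset.Icc 1 w => Z (ℓ : ℕ)) P)
    (hgap : δ ≤ |μ₂ - μ₁|)
    (b c : ℝ) (hc : 0 < c) (hdetect : 2 * b / w + c ≤ δ)
    (S : Ω → ℝ)
    (hS : S = fun ω =>
      (∑ ℓ ∈ Finset.Icc (w / 2 + 1) w, Z ℓ ω) - ∑ ℓ ∈ Finset.Icc 1 (w / 2), Z ℓ ω) :
    ENNReal.ofReal (1 - 2 * Real.exp (-(w : ℝ) * c ^ 2 / 4)) ≤ P {ω | b < |S ω|} := by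
  obtain ⟨m, rfl⟩ := hweven
  have hm : (m + m) / 2 = m := by omega
  simp only [hm] at hmean₁ hmean₂ hS
  have hwR : (0 : ℝ) < (m + m : ℕ) := by exact_mod_cast hw
  have hcenter (ω : Ω) : ∑ ℓ ∈ Icc 1 (m + m), (if ℓ ≤ m then -1 else 1) * (Z ℓ ω - P[Z ℓ]) =
      S ω - m * (μ₂ - μ₁) := by
    rw [sum_Icc_sign_mul_sub_eq m _ _ hmean₁ hmean₂, hS]
  have hfar : b + (m + m : ℕ) * c / 2 ≤ |m * (μ₂ - μ₁)| :=
    calc b + (m + m : ℕ) * c / 2 = m * (2 * b / (m + m : ℕ) + c) := by field_simp; push_cast; ring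
      _ ≤ m * |μ₂ - μ₁| := by gcongr; exact hdetect.trans hgap
      _ = |m * (μ₂ - μ₁)| := by rw [abs_mul, Nat.abs_cast]
  have htail := measure_abs_sum_sign_mul_sub_integral_ge_le hindep
    (fun ℓ hℓ ↦ (hmeas ℓ hℓ).aemeasurable) hbdd (ε := fun ℓ ↦ if ℓ ≤ m then -1 else 1)
    (fun ℓ _ ↦ by split_ifs <;> norm_num)
    (by positivity : 0 ≤ ((m + m : ℕ) : ℝ) * c / 2)
  simp only [hcenter, Nat.card_Icc, Nat.add_sub_cancel] at htail
  have hexp : -2 * (((m + m : ℕ) : ℝ) * c / 2) ^ 2 / (m + m : ℕ) ≤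
      -((m + m : ℕ) : ℝ) * c ^ 2 / 4 := by
    rw [div_le_div_iff₀ hwR four_pos]
    nlinarith [mul_pos (mul_pos hwR hwR) (pow_pos hc 2)]
  rw [← ofReal_measureReal]
  refine ENNReal.ofReal_le_ofReal (le_trans ?_ (one_sub_le_measureReal_lt_abs hfar htail))
  gcongr

/-- Let `w` be an even positive integer; let `Z 1, …, Z (w/2)`
be independent `[0,1]`-valued random variables with common mean `μ₁`, and
`Z (w/2+1), …, Z w` independent `[0,1]`-valued random variables with common mean
`μ₂`, all `w` variables mutually independent, with `|μ₂ − μ₁| ≥ δ`.  If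
`b > 0` and `c > 0` satisfy `δ ≥ 2b/w + c`, then
`P(|S| > b) ≥ 1 − 2·exp(−w·c²/4)`, where
`S = Σ_{ℓ=w/2+1}^{w} Z ℓ − Σ_{ℓ=1}^{w/2} Z ℓ`. -/
theorem mucb_successful_detection
    {Ω : Type*} [MeasurableSpace Ω] (P : Measure Ω) [IsProbabilityMeasure P]
    (w : ℕ) (hw : 0 < w) (hweven : Even w)
    (Z : ℕ → Ω → ℝ) (μ₁ μ₂ δ : ℝ)
    (hmeas : ∀ ℓ ∈ Finset.Icc 1 w, Measurable (Z ℓ))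
    (hbdd : ∀ ℓ ∈ Finset.Icc 1 w, ∀ᵐ ω ∂P, Z ℓ ω ∈ Set.Icc (0 : ℝ) 1)
    (hmean₁ : ∀ ℓ ∈ Finset.Icc 1 (w / 2), ∫ ω, Z ℓ ω ∂P = μ₁)
    (hmean₂ : ∀ ℓ ∈ Finset.Icc (w / 2 + 1) w, ∫ ω, Z ℓ ω ∂P = μ₂)
    (hindep : iIndepFun
      (fun ℓ : Finset.Icc 1 w => Z (ℓ : ℕ)) P)
    (hgap : δ ≤ |μ₂ - μ₁|)
    (b c : ℝ) (hb : 0 < b) (hc : 0 < c) (hdetect : 2 * b / w + c ≤ δ)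
    (S : Ω → ℝ)
    (hS : S = fun ω =>
      (∑ ℓ ∈ Finset.Icc (w / 2 + 1) w, Z ℓ ω) - ∑ ℓ ∈ Finset.Icc 1 (w / 2), Z ℓ ω) :
    ENNReal.ofReal (1 - 2 * Real.exp (-(w : ℝ) * c ^ 2 / 4)) ≤ P {ω | b < |S ω|} :=
  mucb_successful_detection_general P w hw hweven Z μ₁ μ₂ δ hmeas hbdd hmean₁ hmean₂ hindep hgap b c
    hc hdetect S hS
end

section
/- Let K be a positive integer and let s ≥ 0, α ≥ 0, L ≥ 0, C ≥ 0 and Δ > 0 be reals. Suppose for each k ∈ {1, …, K} we are given reals Δ_k ∈ [0,1] and N_k ≥ 0 such that Σ_{k=1}^{K} N_k ≤ s, and such that N_k ≤ (2α√s)/K + 8L/Δ_k² + C whenever Δ_k ≥ Δ. Then Σ_{k=1}^{K} Δ_k·N_k ≤ 2α√s + 8KL/Δ + C·K + Δ·s. (In the bandit interpretation, Δ_k is the suboptimality gap of arm k in a stationary segment of length s, N_k its expected pull count, and this is the gap-independent form of the per-segment regret bound.) -/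
/-! Per arm, either the gap is below `Δ`, and then `Δₖ Nₖ ≤ Δ Nₖ`, or it is at least `Δ`,
and then `Δₖ Nₖ ≤ Δₖ (A + c / Δₖ²) ≤ A + c / Δ` since `Δₖ ≤ 1`. Summing over the `K` arms,
the terms `Δ Nₖ` add up to at most `Δ s` and the others to `K (A + c / Δ)`. -/

theorem mul_le_add_div_add_mul_of_le_add_div_sq {g n A c Δ : ℝ}
    (hg : g ∈ Set.Icc (0 : ℝ) 1) (hn : 0 ≤ n) (hA : 0 ≤ A) (hc : 0 ≤ c) (hΔ : 0 < Δ)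
    (hbound : Δ ≤ g → n ≤ A + c / g ^ 2) :
    g * n ≤ A + c / Δ + Δ * n := by
  obtain ⟨hg0, hg1⟩ := hg
  by_cases hlarge : Δ ≤ g
  · have hgpos : 0 < g := hΔ.trans_le hlarge
    have hgA : g * A ≤ A := mul_le_of_le_one_left hA hg1
    have hcg : c / g ≤ c / Δ := div_le_div_of_nonneg_left hc hΔ hlarge
    calc g * n ≤ g * (A + c / g ^ 2) := mul_le_mul_of_nonneg_left (hbound hlarge) hg0
      _ = g * A + c / g := by field_simp
      _ ≤ A + c / Δ + Δ * n := by nlinarith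
  · have hgΔ : g * n ≤ Δ * n := mul_le_mul_of_nonneg_right (not_le.mp hlarge).le hn
    have : 0 ≤ A + c / Δ := by positivity
    linarith

theorem gap_free_segment_regret_bound_general
    (K : ℕ) (hK : 0 < K) (s α L C Δ : ℝ)
    (hα : 0 ≤ α) (hL : 0 ≤ L) (hC : 0 ≤ C) (hΔ : 0 < Δ)
    (Δk N : Fin K → ℝ)
    (hΔk : ∀ k, Δk k ∈ Set.Icc (0 : ℝ) 1)
    (hN : ∀ k, 0 ≤ N k)
    (hNsum : ∑ k, N k ≤ s)
    (hNbound : ∀ k, Δ ≤ Δk k →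
      N k ≤ (2 * α * Real.sqrt s) / K + 8 * L / (Δk k) ^ 2 + C) :
    ∑ k, Δk k * N k ≤ 2 * α * Real.sqrt s + 8 * K * L / Δ + C * K + Δ * s := by
  set A := (2 * α * Real.sqrt s) / K + C
  have hA : 0 ≤ A := by positivity
  have hK' : (K : ℝ) ≠ 0 := by exact_mod_cast hK.ne'
  have harm : ∀ k, Δk k * N k ≤ A + 8 * L / Δ + Δ * N k := fun k =>
    mul_le_add_div_add_mul_of_le_add_div_sq (hΔk k) (hN k) hA (by positivity) hΔ
      fun h => by linarith [hNbound k h]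
  calc ∑ k, Δk k * N k ≤ ∑ k, (A + 8 * L / Δ + Δ * N k) := Finset.sum_le_sum fun k _ => harm k
    _ = K * (A + 8 * L / Δ) + Δ * ∑ k, N k := by
      rw [Finset.sum_add_distrib, Finset.sum_const, Finset.card_fin, nsmul_eq_mul,
        Finset.mul_sum]
    _ ≤ K * (A + 8 * L / Δ) + Δ * s := by gcongr
    _ = 2 * α * Real.sqrt s + 8 * K * L / Δ + C * K + Δ * s := by
      simp only [A]
      field_simp
      ring

/-- Let `K` be a positive integer and `s ≥ 0`, `α ≥ 0`, `L ≥ 0`,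
`C ≥ 0`, `Δ > 0` reals.  Suppose for each `k ∈ {1,…,K}` we have `Δk k ∈ [0,1]`
and `N k ≥ 0` with `Σ_k N k ≤ s`, and `N k ≤ (2α√s)/K + 8L/(Δk k)² + C`
whenever `Δk k ≥ Δ`.  Then `Σ_k (Δk k)·(N k) ≤ 2α√s + 8KL/Δ + C·K + Δ·s`. -/
theorem gap_free_segment_regret_bound
    (K : ℕ) (hK : 0 < K) (s α L C Δ : ℝ)
    (hs : 0 ≤ s) (hα : 0 ≤ α) (hL : 0 ≤ L) (hC : 0 ≤ C) (hΔ : 0 < Δ)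
    (Δk N : Fin K → ℝ)
    (hΔk : ∀ k, Δk k ∈ Set.Icc (0 : ℝ) 1)
    (hN : ∀ k, 0 ≤ N k)
    (hNsum : ∑ k, N k ≤ s)
    (hNbound : ∀ k, Δ ≤ Δk k →
      N k ≤ (2 * α * Real.sqrt s) / K + 8 * L / (Δk k) ^ 2 + C) :
    ∑ k, Δk k * N k ≤ 2 * α * Real.sqrt s + 8 * K * L / Δ + C * K + Δ * s :=
  gap_free_segment_regret_bound_general K hK s α L C Δ hα hL hC hΔ Δk N hΔk hN hNsum hNbound
end
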